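/- arXiv:1707.04697 — 2 statements merged into one kernel-verified Lean document; each statement's English description precedes it below -/
import Mathlib

section
/- Let R be a reduced commutative ring with identity which is not an integral domain, and suppose that R has n minimal prime ideals with 3 ≤ n < ∞. Then the annihilator-ideal graph A_I(R) is not equal to the annihilating-ideal graph 𝔸𝔾(R), and the girth of A_I(R) equals 3. -/
/-- The vertex set of the annihilator-ideal/annihilating-ideal graphs:
nonzero ideals with nonzero annihilator. -/
abbrev AnnVert (R : Type*) [CommRing R] : Type _ :=
  {I : Ideal R // I ≠ ⊥ ∧ Submodule.annihilator I ≠ ⊥}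

/-- The annihilator-ideal graph `A_I(R)`. -/
def annihilatorIdealGraph (R : Type*) [CommRing R] : SimpleGraph (AnnVert R) where
  Adj I J := I ≠ J ∧
    ((Submodule.annihilator (I.1 * J.1) : Ideal R) : Set R) ≠
      ↑(Submodule.annihilator I.1) ∪ ↑(Submodule.annihilator J.1)
  symm := by
    constructor
    rintro I J ⟨hne, h⟩
    exact ⟨hne.symm, by rwa [mul_comm, Set.union_comm]⟩
  loopless := by constructor; rintro I ⟨h, -⟩; exact h rfl

/-- The annihilating-ideal graph `𝔸𝔾(R)`. -/
def annihilatingIdealGraph (R : Type*) [CommRing R] : SimpleGraph (AnnVert R) where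
  Adj I J := I ≠ J ∧ I.1 * J.1 = ⊥
  symm := by constructor; rintro I J ⟨hne, h⟩; exact ⟨hne.symm, by rwa [mul_comm]⟩
  loopless := by constructor; rintro I ⟨h, -⟩; exact h rfl

/-- `G` is a complete bipartite graph with parts `s` and `t`. -/
def SimpleGraph.IsCompleteBipartiteWith {V : Type*} (G : SimpleGraph V) (s t : Set V) : Prop :=
  Disjoint s t ∧ s ∪ t = Set.univ ∧
    ∀ u v, G.Adj u v ↔ (u ∈ s ∧ v ∈ t) ∨ (u ∈ t ∧ v ∈ s)

/-- `G` is a star graph: complete bipartite with one part a single vertex and the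
other part nonempty. -/
def SimpleGraph.IsStarGraph {V : Type*} (G : SimpleGraph V) : Prop :=
  ∃ (c : V) (t : Set V), t.Nonempty ∧ G.IsCompleteBipartiteWith {c} t

/-! For a minimal prime `p` let `a p` be the intersection of the other minimal primes. With finitely
many minimal primes, prime avoidance gives `a p ⊄ p`, so `a p ≠ 0`; and `a p * a q` lies in every
minimal prime, hence vanishes because `R` is reduced. Three such ideals `A, B, C` form a triangle
in `𝔸𝔾(R)`, which is a subgraph of `A_I(R)` since `Ann(0) = R` is not a union of two proper ideals.
The vertices `A + B` and `B + C` have product containing `B² ≠ 0`, yet for nonzero `x ∈ A`, `z ∈ C`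
the element `x + z` annihilates their product but neither of them: an edge of `A_I(R)` that is not
an edge of `𝔸𝔾(R)`. -/

namespace Ideal

variable {R : Type*} [CommRing R]

theorem mul_self_ne_bot [IsReduced R] {I : Ideal R} (hI : I ≠ ⊥) : I * I ≠ ⊥ := by
  rwa [← sq, Ne, Ideal.pow_eq_bot two_ne_zero]

theorem le_annihilator_of_mul_eq_bot {I J : Ideal R} (h : I * J = ⊥) :
    I ≤ Submodule.annihilator J :=
  Submodule.le_annihilator_iff.mpr h

theorem annihilator_ne_bot_of_mul_eq_bot {I J : Ideal R} (hI : I ≠ ⊥) (h : I * J = ⊥) :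
    Submodule.annihilator J ≠ ⊥ :=
  fun hJ => hI (le_bot_iff.mp (hJ ▸ le_annihilator_of_mul_eq_bot h))

theorem add_notMem_annihilator [IsReduced R] {I : Ideal R} {x y : R} (hx : x ∈ I) (hx0 : x ≠ 0)
    (hxy : x * y = 0) : x + y ∉ Submodule.annihilator I := by
  intro h
  have hxx : (x + y) * x = 0 := Submodule.mem_annihilator.mp h x hx
  rw [add_mul, mul_comm y, hxy, add_zero] at hxx
  exact hx0 (IsReduced.eq_zero x ⟨2, by rw [sq, hxx]⟩)

end Ideal

section MinimalPrimes

variable {R : Type*} [CommRing R]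

def infMinimalPrimesExcept (p : Ideal R) : Ideal R :=
  sInf (minimalPrimes R \ {p})

theorem infMinimalPrimesExcept_not_le (hfin : (minimalPrimes R).Finite) {p : Ideal R}
    (hp : p ∈ minimalPrimes R) : ¬infMinimalPrimesExcept p ≤ p := by
  intro hle
  have hfin' := hfin.sdiff (t := {p})
  rw [infMinimalPrimesExcept, ← hfin'.coe_toFinset, ← Finset.inf_id_eq_sInf,
    hp.isPrime.inf_le'] at hle
  obtain ⟨q, hq, hqp⟩ := hle
  obtain ⟨hq, hqp'⟩ := hfin'.mem_toFinset.mp hq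
  exact hqp' (le_antisymm hqp (hp.2 hq.1 hqp))

theorem infMinimalPrimesExcept_ne_bot (hfin : (minimalPrimes R).Finite) {p : Ideal R}
    (hp : p ∈ minimalPrimes R) : infMinimalPrimesExcept p ≠ ⊥ :=
  fun h => infMinimalPrimesExcept_not_le hfin hp (h ▸ bot_le)

theorem infMinimalPrimesExcept_mul_eq_bot [IsReduced R] {p q : Ideal R} (hpq : p ≠ q) :
    infMinimalPrimesExcept p * infMinimalPrimesExcept q = ⊥ := by
  rw [eq_bot_iff, ← Ideal.radical_bot_of_isReduced, ← Ideal.sInf_minimalPrimes]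
  refine le_sInf fun r hr => ?_
  obtain rfl | hrp := eq_or_ne r p
  · exact Ideal.mul_le_right.trans (sInf_le ⟨hr, hpq⟩)
  · exact Ideal.mul_le_left.trans (sInf_le ⟨hr, hrp⟩)

end MinimalPrimes

theorem SimpleGraph.egirth_eq_three {V : Type*} {G : SimpleGraph V} {a b c : V}
    (hab : G.Adj a b) (hac : G.Adj a c) (hbc : G.Adj b c) : G.egirth = 3 := by
  classical
  obtain ⟨u, w, hw, hl⟩ := SimpleGraph.is3Clique_iff_exists_cycle_length_three.mp
    ⟨_, SimpleGraph.is3Clique_triple_iff.mpr ⟨hab, hac, hbc⟩⟩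
  refine le_antisymm ?_ SimpleGraph.three_le_egirth
  simpa [hl] using SimpleGraph.egirth_le_length hw

section AnnihilatorGraphs

variable {R : Type*} [CommRing R]

theorem annihilatingIdealGraph_le_annihilatorIdealGraph :
    annihilatingIdealGraph R ≤ annihilatorIdealGraph R := by
  rintro I J ⟨hIJ, hmul⟩
  refine ⟨hIJ, fun h => ?_⟩
  have hcover : ((⊤ : Ideal R) : Set R) ⊆
      ↑(Submodule.annihilator I.1) ∪ ↑(Submodule.annihilator J.1) := by
    rw [← h, hmul, Submodule.annihilator_bot]
  rcases Ideal.subset_union.mp hcover with hI | hJ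
  · exact I.2.1 (Submodule.annihilator_eq_top_iff.mp (top_le_iff.mp hI))
  · exact J.2.1 (Submodule.annihilator_eq_top_iff.mp (top_le_iff.mp hJ))

theorem annihilatingIdealGraph_adj_of_mul_eq_bot [IsReduced R] {I J : AnnVert R}
    (h : I.1 * J.1 = ⊥) : (annihilatingIdealGraph R).Adj I J := by
  refine ⟨?_, h⟩
  rintro rfl
  exact Ideal.mul_self_ne_bot I.2.1 h

theorem egirth_annihilatorIdealGraph_eq_three [IsReduced R] {A B C : Ideal R}
    (hA : A ≠ ⊥) (hB : B ≠ ⊥) (hC : C ≠ ⊥)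
    (hAB : A * B = ⊥) (hAC : A * C = ⊥) (hBC : B * C = ⊥) :
    (annihilatorIdealGraph R).egirth = 3 := by
  let vA : AnnVert R := ⟨A, hA, Ideal.annihilator_ne_bot_of_mul_eq_bot hB (by rwa [mul_comm])⟩
  let vB : AnnVert R := ⟨B, hB, Ideal.annihilator_ne_bot_of_mul_eq_bot hA hAB⟩
  let vC : AnnVert R := ⟨C, hC, Ideal.annihilator_ne_bot_of_mul_eq_bot hA hAC⟩
  have adj {I J : AnnVert R} (h : I.1 * J.1 = ⊥) : (annihilatorIdealGraph R).Adj I J :=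
    annihilatingIdealGraph_le_annihilatorIdealGraph (annihilatingIdealGraph_adj_of_mul_eq_bot h)
  exact SimpleGraph.egirth_eq_three (adj (I := vA) (J := vB) hAB) (adj (J := vC) hAC)
    (adj (I := vB) (J := vC) hBC)

theorem annihilatorIdealGraph_ne_annihilatingIdealGraph [IsReduced R] {A B C : Ideal R}
    (hA : A ≠ ⊥) (hB : B ≠ ⊥) (hC : C ≠ ⊥)
    (hAB : A * B = ⊥) (hAC : A * C = ⊥) (hBC : B * C = ⊥) :
    annihilatorIdealGraph R ≠ annihilatingIdealGraph R := by
  have hCI : C * (A ⊔ B) = ⊥ := by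
    rw [Ideal.mul_sup, mul_comm, hAC, mul_comm, hBC, sup_idem]
  have hAJ : A * (B ⊔ C) = ⊥ := by rw [Ideal.mul_sup, hAB, hAC, sup_idem]
  let I : AnnVert R := ⟨A ⊔ B, fun h => hA (le_bot_iff.mp (h ▸ le_sup_left)),
    Ideal.annihilator_ne_bot_of_mul_eq_bot hC hCI⟩
  let J : AnnVert R := ⟨B ⊔ C, fun h => hB (le_bot_iff.mp (h ▸ le_sup_left)),
    Ideal.annihilator_ne_bot_of_mul_eq_bot hA hAJ⟩
  have hIJ : I.1 * J.1 ≠ ⊥ := fun h =>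
    Ideal.mul_self_ne_bot hB (le_bot_iff.mp (h ▸ Ideal.mul_mono le_sup_right le_sup_left))
  have hne : I ≠ J := fun h => Ideal.mul_self_ne_bot hA <| le_bot_iff.mp <|
    (Ideal.mul_mono_right (le_sup_left.trans (congrArg Subtype.val h).le)).trans hAJ.le
  obtain ⟨x, hxA, hx0⟩ := Submodule.exists_mem_ne_zero_of_ne_bot hA
  obtain ⟨z, hzC, hz0⟩ := Submodule.exists_mem_ne_zero_of_ne_bot hC
  have hxz : x * z = 0 := by simpa [hAC] using Ideal.mul_mem_mul hxA hzC
  have hmem : x + z ∈ Submodule.annihilator (I.1 * J.1) :=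
    add_mem (Submodule.annihilator_mono Ideal.mul_le_right
        (Ideal.le_annihilator_of_mul_eq_bot hAJ hxA))
      (Submodule.annihilator_mono Ideal.mul_le_left (Ideal.le_annihilator_of_mul_eq_bot hCI hzC))
  have hadj : (annihilatorIdealGraph R).Adj I J := by
    refine ⟨hne, fun h => ?_⟩
    have hmem' : x + z ∈ (Submodule.annihilator (I.1 * J.1) : Set R) := hmem
    rcases h ▸ hmem' with hI | hJ
    · exact Ideal.add_notMem_annihilator (le_sup_left (b := B) hxA) hx0 hxz hI
    · refine Ideal.add_notMem_annihilator (le_sup_right (a := B) hzC) hz0 ?_ (add_comm x z ▸ hJ)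
      rw [mul_comm, hxz]
  intro hG
  exact hIJ (hG ▸ hadj).2

end AnnihilatorGraphs

theorem stmt7_general (R : Type*) [CommRing R] [IsReduced R]
    (hfin : (minimalPrimes R).Finite) (hcard : 3 ≤ (minimalPrimes R).ncard) :
    annihilatorIdealGraph R ≠ annihilatingIdealGraph R ∧
    (annihilatorIdealGraph R).egirth = 3 := by
  obtain ⟨p, q, r, hp, hq, hr, hpq, hpr, hqr⟩ := (Set.two_lt_ncard_iff hfin).mp hcard
  have hA := infMinimalPrimesExcept_ne_bot hfin hp
  have hB := infMinimalPrimesExcept_ne_bot hfin hq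
  have hC := infMinimalPrimesExcept_ne_bot hfin hr
  have hAB := infMinimalPrimesExcept_mul_eq_bot hpq
  have hAC := infMinimalPrimesExcept_mul_eq_bot hpr
  have hBC := infMinimalPrimesExcept_mul_eq_bot hqr
  exact ⟨annihilatorIdealGraph_ne_annihilatingIdealGraph hA hB hC hAB hAC hBC,
    egirth_annihilatorIdealGraph_eq_three hA hB hC hAB hAC hBC⟩

theorem stmt7 (R : Type*) [CommRing R] [Nontrivial R] [IsReduced R] (hdom : ¬IsDomain R)
    (hfin : (minimalPrimes R).Finite) (hcard : 3 ≤ (minimalPrimes R).ncard) :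
    annihilatorIdealGraph R ≠ annihilatingIdealGraph R ∧
    (annihilatorIdealGraph R).egirth = 3 :=
  stmt7_general R hfin hcard
end

section
/- Let R be an Artinian commutative ring with identity which is not an integral domain, and suppose the annihilating-ideal graph 𝔸𝔾(R) is a star graph. Then the annihilator-ideal graph A_I(R) is a complete graph. -/
/-!
Let `c` be the centre of the star. A vertex `L ≠ c` is adjacent to `Ann L`, so `Ann L` is `c` or
`L`, and two distinct vertices other than `c` never multiply to zero. A union of two ideals is an
ideal only if one contains the other, so if `I ≠ J` are not adjacent in `A_I(R)` we may assume
`Ann (I J) = Ann I`; then `Ann J = c`.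

If `Ann I = I`, the ideal `I J` is `I` (then Nakayama gives `J = R`), or `c`, or another vertex
killed by `I`. If `Ann I = c`, pick a minimal ideal `M ≤ I J`. For `M ≠ c`, Nakayama applied to
`M X = M` gives `X = Ann c` for both `X = I` and `X = J`. For `M = c`, an ideal `Q ≤ I` minimal
with `Q · Ann c ≠ 0` satisfies `Q · Ann c = c`, and `Q` becomes a vertex other than `c` killed by
`I` or by `I J`. The Artinian hypothesis provides the minimal ideals and, through the Noetherian
property, the finite generation needed for Nakayama.
-/

namespace Submodule

theorem eq_or_eq_of_coe_eq_union {R M : Type*} [Ring R] [AddCommGroup M] [Module R M]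
    {N P Q : Submodule R M} (h : (N : Set M) = (P : Set M) ∪ Q) : N = P ∨ N = Q :=
  (AddSubgroupClass.subset_union.1 h.subset).imp
    (fun hle => hle.antisymm fun _ hx => h.superset (Or.inl hx))
    (fun hle => hle.antisymm fun _ hx => h.superset (Or.inr hx))

end Submodule

namespace Ideal

variable {R : Type*} [CommRing R] {I J : Ideal R}

theorem le_annihilator_iff_mul_eq_bot : J ≤ I.annihilator ↔ J * I = ⊥ :=
  Submodule.le_annihilator_iff

theorem le_annihilator_annihilator (I : Ideal R) : I ≤ I.annihilator.annihilator :=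
  le_annihilator_iff_mul_eq_bot.2 (Submodule.mul_annihilator I)

theorem annihilator_top : (⊤ : Ideal R).annihilator = ⊥ :=
  eq_bot_iff.2 fun r hr => by simpa using Submodule.mem_annihilator.1 hr 1 trivial

theorem exists_mem_annihilator_sub_one_mem [IsNoetherianRing R] (h : I * J = I) :
    ∃ r ∈ I.annihilator, r - 1 ∈ J := by
  obtain ⟨r, hr1, hr⟩ := Submodule.exists_sub_one_mem_and_smul_eq_zero_of_fg_of_le_smul J I
    (IsNoetherian.noetherian I) (by rw [smul_eq_mul, mul_comm, h])
  exact ⟨r, Submodule.mem_annihilator.2 hr, hr1⟩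

theorem eq_top_of_mul_eq_self_of_annihilator_le [IsNoetherianRing R] (h : I * J = I)
    (hle : I.annihilator ≤ J) : J = ⊤ := by
  obtain ⟨r, hr, hr1⟩ := exists_mem_annihilator_sub_one_mem h
  rw [eq_top_iff_one, show (1 : R) = r - (r - 1) by ring]
  exact J.sub_mem (hle hr) hr1

def IsAnnihilating (I : Ideal R) : Prop := I ≠ ⊥ ∧ I.annihilator ≠ ⊥

/-- `annihilatingIdealGraph R` is a star with centre `c`, phrased on ideals. -/
structure IsStarCentre (c : Ideal R) : Prop where
  isAnnihilating : c.IsAnnihilating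
  mul_eq_bot : ∀ L : Ideal R, L.IsAnnihilating → L ≠ c → c * L = ⊥
  mul_ne_bot : ∀ L L' : Ideal R, L.IsAnnihilating → L'.IsAnnihilating → L ≠ c → L' ≠ c →
    L ≠ L' → L * L' ≠ ⊥

theorem exists_isStarCentre (h : (annihilatingIdealGraph R).IsStarGraph) :
    ∃ c : Ideal R, c.IsStarCentre := by
  obtain ⟨c, t, -, -, huniv, hadj⟩ := h
  refine ⟨c.1, c.2, fun L hL hLc => ?_, fun L L' hL hL' hLc hL'c hne h => ?_⟩
  · have hLt : (⟨L, hL⟩ : AnnVert R) ∈ t :=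
      ((huniv ▸ Set.mem_univ _ : _ ∈ {c} ∪ t)).resolve_left fun h => hLc (congrArg Subtype.val h)
    exact ((hadj c ⟨L, hL⟩).2 (Or.inl ⟨rfl, hLt⟩)).2
  · rcases (hadj ⟨L, hL⟩ ⟨L', hL'⟩).1 ⟨fun h => hne (congrArg Subtype.val h), h⟩ with
      ⟨hLc', -⟩ | ⟨-, hL'c'⟩
    · exact hLc (congrArg Subtype.val hLc')
    · exact hL'c (congrArg Subtype.val hL'c')

namespace IsStarCentre

variable {c L M Q X Y : Ideal R} (hc : c.IsStarCentre)
include hc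

theorem isAnnihilating_of_le_annihilator (hX : X ≠ ⊥) (h : c ≤ X.annihilator) :
    X.IsAnnihilating :=
  ⟨hX, fun hbot => hc.isAnnihilating.1 (le_bot_iff.1 (hbot ▸ h))⟩

theorem annihilator_eq_or_eq (hL : L.IsAnnihilating) (hLc : L ≠ c) :
    L.annihilator = c ∨ L.annihilator = L := by
  by_contra! h
  have hann : L.annihilator.IsAnnihilating :=
    ⟨hL.2, fun hbot => hL.1 (le_bot_iff.1 (hbot ▸ le_annihilator_annihilator L))⟩
  exact hc.mul_ne_bot _ _ hann hL h.1 hLc h.2 (Submodule.annihilator_mul L)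

theorem le_of_mul_eq_bot (hXc : X ≠ c) (hXann : X.annihilator = c) (hY : Y.IsAnnihilating)
    (hYc : Y ≠ c) (h : X * Y = ⊥) : X ≤ c := by
  by_cases hX : X = ⊥
  · simp [hX]
  obtain rfl : X = Y := by
    by_contra hne
    exact hc.mul_ne_bot X Y ⟨hX, hXann ▸ hc.isAnnihilating.1⟩ hY hXc hYc hne h
  exact hXann ▸ le_annihilator_iff_mul_eq_bot.2 h

theorem annihilator_mul_ne_of_annihilator_eq_self [IsNoetherianRing R] (hI : I.IsAnnihilating)
    (hIc : I ≠ c) (hJ : J.IsAnnihilating) (hJc : J ≠ c) (hIann : I.annihilator = I)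
    (hK0 : I * J ≠ ⊥) : (I * J).annihilator ≠ I.annihilator := by
  intro hK
  have hII : I * I = ⊥ := le_annihilator_iff_mul_eq_bot.1 hIann.ge
  by_cases hKI : I * J = I
  · have hJtop : J = ⊤ :=
      eq_top_of_mul_eq_self_of_annihilator_le hKI (hIann.le.trans (hKI ▸ mul_le_right))
    exact hJ.2 (by rw [hJtop, annihilator_top])
  by_cases hKc : I * J = c
  · have hJI : J ≤ I := by
      rw [← hIann, ← hK, hKc, le_annihilator_iff_mul_eq_bot, mul_comm]
      exact hc.mul_eq_bot J hJ hJc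
    exact hK0 (le_bot_iff.1 (hII ▸ mul_mono_right hJI))
  exact hc.mul_ne_bot _ _ ⟨hK0, hK ▸ hI.2⟩ hI hKc hIc hKI
    (le_bot_iff.1 (hII ▸ mul_mono_left mul_le_left))

theorem eq_annihilator_of_isAtom_le [IsNoetherianRing R] (hXann : X.annihilator = c)
    (hXc : ¬X ≤ c) (hM : IsAtom M) (hMX : M ≤ X) (hMc : M ≠ c) : X = c.annihilator := by
  have hXc' : X ≠ c := fun h => hXc h.le
  have hXvert : X.IsAnnihilating := ⟨ne_bot_of_le_ne_bot hM.1 hMX, hXann ▸ hc.isAnnihilating.1⟩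
  have hMvert : M.IsAnnihilating :=
    hc.isAnnihilating_of_le_annihilator hM.1 (hXann ▸ Submodule.annihilator_mono hMX)
  rcases hM.le_iff.1 (mul_le_left : M * X ≤ M) with hMX0 | hMXM
  · exact absurd (hc.le_of_mul_eq_bot hXc' hXann hMvert hMc (by rwa [mul_comm])) hXc
  rcases hc.annihilator_eq_or_eq hMvert hMc with hMann | hMann
  · obtain ⟨r, hr, hr1⟩ := exists_mem_annihilator_sub_one_mem hMXM
    refine le_antisymm ?_ fun a ha => ?_
    · rw [le_annihilator_iff_mul_eq_bot, mul_comm]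
      exact hc.mul_eq_bot X hXvert hXc'
    · have har : a * r = 0 := Submodule.mem_annihilator.1 ha r (hMann ▸ hr)
      rw [show a = -(a * (r - 1)) by linear_combination har]
      exact X.neg_mem (X.mul_mem_left a hr1)
  · have hXtop := eq_top_of_mul_eq_self_of_annihilator_le hMXM (hMann.le.trans hMX)
    exact absurd (by rw [← hXann, hXtop, annihilator_top]) hc.isAnnihilating.1

theorem exists_le_mul_eq [IsArtinianRing R] (hcat : IsAtom c) (hY : Y.annihilator = c)
    (hcY : c ≤ Y) (hIY : I ≤ Y) (hI : ¬I ≤ c) : ∃ Q ≤ I, Q * Y = c := by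
  have hIY0 : I * Y ≠ ⊥ := fun h => hI (hY ▸ le_annihilator_iff_mul_eq_bot.2 h)
  obtain ⟨Q, ⟨hQI, hQY⟩, hmin⟩ :=
    wellFounded_lt.has_min {Z : Ideal R | Z ≤ I ∧ Z * Y ≠ ⊥} ⟨I, le_rfl, hIY0⟩
  refine ⟨Q, hQI, ?_⟩
  by_cases hQYY : Q * Y * Y = ⊥
  · exact (hcat.le_iff.1 (hY ▸ le_annihilator_iff_mul_eq_bot.2 hQYY)).resolve_left hQY
  exfalso
  have hQY' : Q * Y = Q := mul_le_left.eq_of_not_lt (hmin _ ⟨mul_le_left.trans hQI, hQYY⟩)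
  have hQ : Q.IsAnnihilating := hc.isAnnihilating_of_le_annihilator
    (fun h => hQY (by rw [h, bot_mul])) (hY ▸ Submodule.annihilator_mono (hQI.trans hIY))
  have hQc : Q ≠ c := by
    rintro rfl
    exact hQY (hY ▸ Submodule.annihilator_mul Y)
  have hQann : Q.annihilator ≤ Y := by
    rcases hc.annihilator_eq_or_eq hQ hQc with h | h <;> rw [h]
    exacts [hcY, hQI.trans hIY]
  have hYtop := eq_top_of_mul_eq_self_of_annihilator_le hQY' hQann
  exact hc.isAnnihilating.1 (by rw [← hY, hYtop, annihilator_top])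

theorem not_mul_le (hcat : IsAtom c) (hcK : c ≤ I * J) (hIann : I.annihilator = c)
    (hKann : (I * J).annihilator = c) (hJ : c * J = ⊥) (hI : ¬I ≤ c) (hQ : Q.IsAnnihilating)
    (hQc : Q ≠ c) : ¬Q * I ≤ c := by
  intro hQI
  rcases hcat.le_iff.1 hQI with hQI0 | hQIc
  · exact hI (hc.le_of_mul_eq_bot (fun h => hI h.le) hIann hQ hQc (by rwa [mul_comm]))
  have hKc : I * J ≠ c := by
    intro hKc
    apply hI
    rw [← hKann, hKc, le_annihilator_iff_mul_eq_bot, mul_comm,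
      ← le_annihilator_iff_mul_eq_bot, hIann]
  have hKQ : I * J * Q = ⊥ := by
    rw [mul_comm, ← mul_assoc, hQIc, hJ]
  exact hKc (le_antisymm (hc.le_of_mul_eq_bot hKc hKann hQ hQc hKQ) hcK)

theorem not_le_mul_of_isAtom [IsArtinianRing R] (hcat : IsAtom c) (hI : ¬I ≤ c)
    (hIann : I.annihilator = c) (hKann : (I * J).annihilator = c) (hJ : c * J = ⊥) :
    ¬c ≤ I * J := by
  intro hcK
  have hIY : I ≤ c.annihilator := by
    rw [le_annihilator_iff_mul_eq_bot, mul_comm, ← le_annihilator_iff_mul_eq_bot, hIann]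
  have hJY : J ≤ c.annihilator := le_annihilator_iff_mul_eq_bot.2 (by rwa [mul_comm])
  have hcY : c ≤ c.annihilator := hcK.trans (mul_le_left.trans hIY)
  have hYann : c.annihilator.annihilator = c := by
    have hY : c.annihilator.IsAnnihilating := hc.isAnnihilating_of_le_annihilator
      (ne_bot_of_le_ne_bot hcat.1 hcY) (le_annihilator_annihilator c)
    refine (hc.annihilator_eq_or_eq hY fun h => hI (h ▸ hIY)).resolve_right fun h => hcat.1 ?_
    have hYY : c.annihilator * c.annihilator = ⊥ := le_annihilator_iff_mul_eq_bot.1 h.ge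
    exact le_bot_iff.1 (hYY ▸ hcK.trans (mul_mono hIY hJY))
  obtain ⟨Q, hQI, hQY⟩ := hc.exists_le_mul_eq hcat hYann hcY hIY hI
  have hQ : Q.IsAnnihilating := hc.isAnnihilating_of_le_annihilator
    (fun h => hcat.1 (by rw [← hQY, h, bot_mul])) (hIann ▸ Submodule.annihilator_mono hQI)
  have hQc : Q ≠ c := by
    rintro rfl
    exact hcat.1 (hQY ▸ Submodule.mul_annihilator Q)
  exact hc.not_mul_le hcat hcK hIann hKann hJ hI hQ hQc (hQY ▸ mul_mono_right hIY)

theorem annihilator_mul_ne [IsArtinianRing R] (hI : I.IsAnnihilating) (hJ : J.IsAnnihilating)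
    (hIJ : I ≠ J) : (I * J).annihilator ≠ I.annihilator := by
  intro hK
  have hK0 : I * J ≠ ⊥ := fun h =>
    hI.1 (Submodule.annihilator_eq_top_iff.1 (by rw [← hK, h, Submodule.annihilator_bot]))
  have hIc : I ≠ c := by
    rintro rfl
    exact hK0 (hc.mul_eq_bot J hJ hIJ.symm)
  have hJc : J ≠ c := by
    rintro rfl
    exact hK0 (by rw [mul_comm, hc.mul_eq_bot I hI hIJ])
  have hcJ : c * J = ⊥ := hc.mul_eq_bot J hJ hJc
  have hJann : J.annihilator = c := by
    refine (hc.annihilator_eq_or_eq hJ hJc).resolve_right fun h => hK0 ?_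
    rw [mul_comm, ← le_annihilator_iff_mul_eq_bot, ← hK]
    exact h.ge.trans (Submodule.annihilator_mono mul_le_right)
  rcases hc.annihilator_eq_or_eq hI hIc with hIann | hIann
  · have hIc' : I * c = ⊥ := by rw [mul_comm, hc.mul_eq_bot I hI hIc]
    have hnI : ¬I ≤ c := fun h => hK0 (le_bot_iff.1 (hcJ ▸ mul_mono_left h))
    have hnJ : ¬J ≤ c := fun h => hK0 (le_bot_iff.1 (hIc' ▸ mul_mono_right h))
    obtain ⟨M, hM, hMK⟩ := (eq_bot_or_exists_atom_le (I * J)).resolve_left hK0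
    by_cases hMc : M = c
    · rw [hMc] at hM hMK
      exact hc.not_le_mul_of_isAtom hM hnI hIann (hK.trans hIann) hcJ hMK
    · exact hIJ <| (hc.eq_annihilator_of_isAtom_le hIann hnI hM (hMK.trans mul_le_left) hMc).trans
        (hc.eq_annihilator_of_isAtom_le hJann hnJ hM (hMK.trans mul_le_right) hMc).symm
  · exact hc.annihilator_mul_ne_of_annihilator_eq_self hI hIc hJ hJc hIann hK0 hK

end IsStarCentre

end Ideal

theorem stmt19_general (R : Type*) [CommRing R]
    [IsArtinianRing R]
    (hstar : (annihilatingIdealGraph R).IsStarGraph) :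
    ∀ I J : AnnVert R, I ≠ J → (annihilatorIdealGraph R).Adj I J := by
  obtain ⟨c, hc⟩ := Ideal.exists_isStarCentre hstar
  intro I J hIJ
  have hIJ' : I.1 ≠ J.1 := Subtype.coe_injective.ne hIJ
  refine ⟨hIJ, fun h => ?_⟩
  rcases Submodule.eq_or_eq_of_coe_eq_union h with hI | hJ
  · exact hc.annihilator_mul_ne I.2 J.2 hIJ' hI
  · exact hc.annihilator_mul_ne J.2 I.2 hIJ'.symm (by rwa [mul_comm])

theorem stmt19 (R : Type*) [CommRing R] [Nontrivial R] (hdom : ¬IsDomain R)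
    [IsArtinianRing R]
    (hstar : (annihilatingIdealGraph R).IsStarGraph) :
    ∀ I J : AnnVert R, I ≠ J → (annihilatorIdealGraph R).Adj I J :=
  stmt19_general R hstar
end
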